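/- Relaxed list matching bound: under Gumbel-max list sampling, the matching probability satisfies Pr[Y ∈ {X^(1), …, X^(K)}] ≥ Σ_{j=1}^{N} q_j · ( 1 + q_j/(K·p_j) )^{−1}. -/

import Mathlib

/-!
Fix `(j, m)` and let `c (i, k) = q i / q j + [k = m] p i / p j`. On the event that
`c (i, k) * S j m < S i k` for every `(i, k) ≠ (j, m)` (the clock `S j m` wins a handicapped
race), `Y = j` and `X m = j`. For i.i.d. `Exp(1)` clocks, conditioning on the winner's value `t`
gives this event the probability
`∫ e^{-t} ∏ e^{-c t} dt = 1 / (1 + ∑ c) = (K / q j + 1 / p j - 1)⁻¹`.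
Two such events are almost surely disjoint because the handicaps of `(j, m)` and `(j', m')`
against each other multiply to at least `q j' / q j * (q j / q j') = 1`. Summing over `(j, m)`
gives `∑ j, K (K / q j + 1 / p j - 1)⁻¹`, which dominates `∑ j, q j (1 + q j / (K p j))⁻¹`.
-/

open MeasureTheory ProbabilityTheory Set

lemma measurePreserving_piSplitAt {ι α : Type*} [Fintype ι] [DecidableEq ι] [MeasurableSpace α]
    (μ : ι → Measure α) [∀ j, SigmaFinite (μ j)] (i : ι) :
    MeasurePreserving (Equiv.piSplitAt i fun _ => α) (Measure.pi μ)
      ((μ i).prod (Measure.pi fun j : {j // j ≠ i} => μ j)) := by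
  have hsplit := measurePreserving_piEquivPiSubtypeProd μ (· = i)
  have hμ : (fun j : {j // j = i} => μ j) = fun _ => μ i := funext fun j => by rw [j.2]
  have hfirst := measurePreserving_funUnique (μ i) {j // j = i}
  rw [hμ] at hsplit
  rw [Subsingleton.elim Unique.fintype (Subtype.fintype _)] at hfirst
  exact (hfirst.prod (.id _)).comp hsplit

lemma ae_nonneg_expMeasure (r : ℝ) : ∀ᵐ t ∂expMeasure r, 0 ≤ t := by
  simp only [ae_iff, not_le]
  exact (withDensity_apply _ measurableSet_Iio).trans (lintegral_exponentialPDF_of_nonpos le_rfl)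

lemma expMeasure_Ioi {r a : ℝ} (hr : 0 < r) (ha : 0 ≤ a) :
    expMeasure r (Ioi a) = ENNReal.ofReal (Real.exp (-(r * a))) := by
  have := isProbabilityMeasure_expMeasure hr
  have : Real.exp (-(r * a)) ≤ 1 := Real.exp_le_one_iff.2 (by nlinarith)
  rw [← compl_Iic, prob_compl_eq_one_sub measurableSet_Iic, ← ofReal_cdf, cdf_expMeasure_eq hr,
    if_pos ha, ← ENNReal.ofReal_one, ← ENNReal.ofReal_sub _ (by linarith)]
  congr 1; ring

lemma lintegral_exp_neg_mul_expMeasure {r a : ℝ} (hr : 0 < r) (ha : 0 ≤ a) :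
    ∫⁻ t, ENNReal.ofReal (Real.exp (-(a * t))) ∂expMeasure r = ENNReal.ofReal (r / (r + a)) := by
  have hra : 0 < r + a := by linarith
  have hdensity : ∀ t, exponentialPDF r t * ENNReal.ofReal (Real.exp (-(a * t)))
      = ENNReal.ofReal (r / (r + a)) * exponentialPDF (r + a) t := by
    intro t
    rcases lt_or_ge t 0 with ht | ht
    · simp [exponentialPDF_of_neg ht]
    · rw [exponentialPDF_of_nonneg ht, exponentialPDF_of_nonneg ht,
        ← ENNReal.ofReal_mul (by positivity), ← ENNReal.ofReal_mul (by positivity), mul_assoc,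
        ← Real.exp_add, ← mul_assoc, div_mul_cancel₀ r hra.ne']
      ring_nf
  have hexp : expMeasure r = volume.withDensity (exponentialPDF r) := rfl
  have hmeas (s : ℝ) : Measurable (exponentialPDF s) :=
    (measurable_exponentialPDFReal s).ennreal_ofReal
  rw [hexp, lintegral_withDensity_eq_lintegral_mul _ (hmeas r) (by fun_prop)]
  simp only [Pi.mul_apply, hdensity]
  rw [lintegral_const_mul _ (hmeas _), lintegral_exponentialPDF_eq_one hra, mul_one]

section raceSet

variable {ι : Type*}

def raceSet (i : ι) (c : ι → ℝ) : Set (ι → ℝ) := {x | ∀ j ≠ i, c j * x i < x j}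

lemma measurableSet_raceSet [Countable ι] (i : ι) (c : ι → ℝ) : MeasurableSet (raceSet i c) := by
  simp only [raceSet, ofPred_forall]
  exact .iInter fun j => .iInter fun _ => measurableSet_lt (by fun_prop) (by fun_prop)

lemma raceSet_inter_raceSet_subset {i i' : ι} {c c' : ι → ℝ} (hne : i ≠ i')
    (hc' : 0 ≤ c' i) (hcc' : 1 ≤ c i' * c' i) : raceSet i c ∩ raceSet i' c' ⊆ {x | x i < 0} := by
  rintro x ⟨hx, hx'⟩
  by_contra hneg
  have hxi : 0 ≤ x i := not_lt.1 hneg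
  have hi' := hx i' hne.symm
  have hi := hx' i hne
  nlinarith [mul_le_mul_of_nonneg_left hi'.le hc', mul_le_mul_of_nonneg_right hcc' hxi]

lemma aedisjoint_preimage_raceSet {Ω : Type*} [MeasurableSpace Ω] {μ : Measure Ω}
    {Z : Ω → ι → ℝ} {i i' : ι} {c c' : ι → ℝ} (hne : i ≠ i') (hc' : 0 ≤ c' i)
    (hcc' : 1 ≤ c i' * c' i) (hZ : ∀ᵐ ω ∂μ, 0 ≤ Z ω i) :
    AEDisjoint μ (Z ⁻¹' raceSet i c) (Z ⁻¹' raceSet i' c') :=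
  measure_mono_null (fun _ hω => not_le.2 (raceSet_inter_raceSet_subset hne hc' hcc' hω))
    (ae_iff.1 hZ)

variable [Fintype ι] [DecidableEq ι]

lemma pi_raceSet (ν : Measure ℝ) [SigmaFinite ν] (i : ι) (c : ι → ℝ) :
    Measure.pi (fun _ => ν) (raceSet i c) = ∫⁻ t, ∏ j : {j // j ≠ i}, ν (Ioi (c j * t)) ∂ν := by
  set B : Set (ℝ × ({j // j ≠ i} → ℝ)) := {z | ∀ j : {j // j ≠ i}, c j * z.1 < z.2 j}
  have hB : MeasurableSet B := by
    simp only [B, ofPred_forall]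
    exact .iInter fun j => measurableSet_lt (by fun_prop) (by fun_prop)
  have hslice (t : ℝ) : Prod.mk t ⁻¹' B = univ.pi fun j : {j // j ≠ i} => Ioi (c j * t) := by
    ext; simp [B]
  have hrace : raceSet i c = Equiv.piSplitAt i (fun _ => ℝ) ⁻¹' B := by
    ext x; simp [raceSet, B, Equiv.piSplitAt]
  rw [hrace, (measurePreserving_piSplitAt _ i).measure_preimage hB.nullMeasurableSet,
    Measure.prod_apply hB]
  simp only [hslice, Measure.pi_pi]

lemma pi_expMeasure_raceSet (i : ι) {c : ι → ℝ} (hc : ∀ j ≠ i, 0 ≤ c j) :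
    Measure.pi (fun _ => expMeasure 1) (raceSet i c)
      = ENNReal.ofReal (1 + ∑ j ∈ Finset.univ.erase i, c j)⁻¹ := by
  have := isProbabilityMeasure_expMeasure one_pos
  have hsum : ∑ j ∈ Finset.univ.erase i, c j = ∑ j : {j // j ≠ i}, c j :=
    Finset.sum_subtype _ (by simp) c
  have hC : 0 ≤ ∑ j : {j // j ≠ i}, c j := Finset.sum_nonneg fun j _ => hc j j.2
  have htail : ∀ᵐ t ∂expMeasure 1, ∏ j : {j // j ≠ i}, expMeasure 1 (Ioi (c j * t))
      = ENNReal.ofReal (Real.exp (-((∑ j : {j // j ≠ i}, c j) * t))) := by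
    filter_upwards [ae_nonneg_expMeasure 1] with t ht
    rw [Finset.prod_congr rfl fun (j : {j // j ≠ i}) _ =>
        expMeasure_Ioi one_pos (mul_nonneg (hc j j.2) ht),
      ← ENNReal.ofReal_prod_of_nonneg fun _ _ => (Real.exp_pos _).le, ← Real.exp_sum,
      Finset.sum_mul, ← Finset.sum_neg_distrib]
    simp only [one_mul]
  rw [pi_raceSet, lintegral_congr_ae htail, lintegral_exp_neg_mul_expMeasure one_pos hC, hsum,
    one_div]

lemma measure_preimage_raceSet {Ω : Type*} [MeasurableSpace Ω] {μ : Measure Ω}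
    {Z : ι → Ω → ℝ} (hZ : ∀ j, Measurable (Z j)) (hind : iIndepFun Z μ)
    (hexp : ∀ j, μ.map (Z j) = expMeasure 1) (i : ι) {c : ι → ℝ} (hc : ∀ j ≠ i, 0 ≤ c j) :
    μ ((fun ω j => Z j ω) ⁻¹' raceSet i c)
      = ENNReal.ofReal (1 + ∑ j ∈ Finset.univ.erase i, c j)⁻¹ := by
  rw [← Measure.map_apply (measurable_pi_lambda _ hZ) (measurableSet_raceSet i c),
    hind.map_fun_eq_pi_map fun j => (hZ j).aemeasurable]
  simp only [hexp]
  exact pi_expMeasure_raceSet i hc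

end raceSet

lemma div_add_one_div_sub_one_pos {K p q : ℝ} (hK : 1 ≤ K) (hp : 0 < p) (hq : 0 < q)
    (hq1 : q ≤ 1) : 0 < K / q + 1 / p - 1 := by
  have : 1 ≤ K / q := (one_le_div hq).2 (hq1.trans hK)
  have : 0 < 1 / p := one_div_pos.2 hp
  linarith

lemma mul_inv_one_add_div_le {K p q : ℝ} (hK : 1 ≤ K) (hp : 0 < p) (hq : 0 < q) (hq1 : q ≤ 1) :
    q * (1 + q / (K * p))⁻¹ ≤ K * (K / q + 1 / p - 1)⁻¹ := by
  have hpos := div_add_one_div_sub_one_pos hK hp hq hq1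
  have hK0 : 0 < K := by linarith
  rw [← div_eq_mul_inv, ← div_eq_mul_inv, div_le_div_iff₀ (by positivity) hpos]
  have e1 : q * (K / q + 1 / p - 1) = K + q / p - q := by field_simp
  have e2 : K * (1 + q / (K * p)) = K + q / p := by field_simp
  rw [e1, e2]
  linarith

section raceWeight

variable {N K : ℕ} {p q : Fin N → ℝ}

variable (p q) in
noncomputable def raceWeight (j : Fin N) (m : Fin K) (l : Fin N × Fin K) : ℝ :=
  q l.1 / q j + if l.2 = m then p l.1 / p j else 0

lemma raceWeight_nonneg (hp : ∀ i, 0 ≤ p i) (hq : ∀ i, 0 ≤ q i) (j : Fin N) (m : Fin K)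
    (l : Fin N × Fin K) : 0 ≤ raceWeight p q j m l := by
  have := div_nonneg (hq l.1) (hq j)
  have := div_nonneg (hp l.1) (hp j)
  unfold raceWeight
  split_ifs <;> positivity

lemma div_le_raceWeight (hp : ∀ i, 0 ≤ p i) (j i : Fin N) (m k : Fin K) :
    q i / q j ≤ raceWeight p q j m (i, k) := by
  unfold raceWeight
  split_ifs
  exacts [le_add_of_nonneg_right (div_nonneg (hp i) (hp j)), (add_zero _).ge]

lemma div_le_raceWeight_self (hq : ∀ i, 0 ≤ q i) (j i : Fin N) (m : Fin K) :
    p i / p j ≤ raceWeight p q j m (i, m) := by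
  simpa [raceWeight] using div_nonneg (hq i) (hq j)

lemma one_le_raceWeight_mul_raceWeight (hp : ∀ i, 0 ≤ p i) (hq : ∀ i, 0 < q i) (j j' : Fin N)
    (m m' : Fin K) : 1 ≤ raceWeight p q j m (j', m') * raceWeight p q j' m' (j, m) :=
  calc (1 : ℝ) = q j' / q j * (q j / q j') := by field_simp [(hq j).ne', (hq j').ne']
    _ ≤ _ := mul_le_mul (div_le_raceWeight hp ..) (div_le_raceWeight hp ..)
      (div_nonneg (hq j).le (hq j').le) (raceWeight_nonneg hp (fun i => (hq i).le) ..)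

lemma one_add_sum_erase_raceWeight (hp : ∀ i, p i ≠ 0) (hq : ∀ i, q i ≠ 0)
    (hpsum : ∑ i, p i = 1) (hqsum : ∑ i, q i = 1) (j : Fin N) (m : Fin K) :
    1 + ∑ l ∈ Finset.univ.erase (j, m), raceWeight p q j m l = K / q j + 1 / p j - 1 := by
  have hsum : ∑ l, raceWeight p q j m l = K / q j + 1 / p j := by
    simp [raceWeight, Fintype.sum_prod_type, Finset.sum_add_distrib, ← Finset.sum_div,
      ← Finset.mul_sum, hpsum, hqsum]
  have hself : raceWeight p q j m (j, m) = 2 := by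
    simp [raceWeight, hp j, hq j, one_add_one_eq_two]
  linarith [Finset.sum_erase_add _ (raceWeight p q j m) (Finset.mem_univ (j, m))]

lemma eq_of_mem_raceSet_of_iInf_div_lt (hp : ∀ i, 0 ≤ p i) (hq : ∀ i, 0 < q i)
    {s : Fin N → Fin K → ℝ} {j y : Fin N} {m : Fin K} (hs : 0 ≤ s j m)
    (hrace : (fun l => s l.1 l.2) ∈ raceSet (j, m) (raceWeight p q j m))
    (hy : ∀ i ≠ y, (⨅ k, s y k) / q y < (⨅ k, s i k) / q i) : y = j := by
  by_contra hyj
  have : Nonempty (Fin K) := ⟨m⟩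
  have hlow : q y / q j * s j m ≤ ⨅ k, s y k := le_ciInf fun k =>
    (mul_le_mul_of_nonneg_right (div_le_raceWeight hp j y m k) hs).trans
      (hrace (y, k) (by simp [hyj])).le
  have hy_ge : s j m / q j ≤ (⨅ k, s y k) / q y := by
    rw [le_div_iff₀ (hq y)]
    calc s j m / q j * q y = q y / q j * s j m := by ring
      _ ≤ _ := hlow
  have hj_le : (⨅ k, s j k) / q j ≤ s j m / q j :=
    div_le_div_of_nonneg_right (ciInf_le (Set.finite_range _).bddBelow m) (hq j).le
  linarith [hy j (Ne.symm hyj)]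

lemma eq_of_mem_raceSet_of_div_lt (hp : ∀ i, 0 < p i) (hq : ∀ i, 0 ≤ q i)
    {s : Fin N → Fin K → ℝ} {j x : Fin N} {m : Fin K} (hs : 0 ≤ s j m)
    (hrace : (fun l => s l.1 l.2) ∈ raceSet (j, m) (raceWeight p q j m))
    (hx : ∀ i ≠ x, s x m / p x < s i m / p i) : x = j := by
  by_contra hxj
  have hlow : p x / p j * s j m < s x m :=
    (mul_le_mul_of_nonneg_right (div_le_raceWeight_self hq j x m) hs).trans_lt
      (hrace (x, m) (by simp [hxj]))
  have hx_lt := hx j (Ne.symm hxj)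
  rw [div_lt_iff₀ (hp x)] at hx_lt
  have : s j m / p j * p x = p x / p j * s j m := by ring
  linarith

lemma exists_eq_of_mem_raceSet (hp : ∀ i, 0 < p i) (hq : ∀ i, 0 < q i)
    {s : Fin N → Fin K → ℝ} {j : Fin N} {m : Fin K} (hs : 0 ≤ s j m)
    (hrace : (fun l => s l.1 l.2) ∈ raceSet (j, m) (raceWeight p q j m)) {y : Fin N}
    (hy : ∀ i ≠ y, (⨅ k, s y k) / q y < (⨅ k, s i k) / q i) {x : Fin K → Fin N}
    (hx : ∀ k, ∀ i ≠ x k, s (x k) k / p (x k) < s i k / p i) : ∃ k, x k = y :=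
  ⟨m, (eq_of_mem_raceSet_of_div_lt hp (fun i => (hq i).le) hs hrace (hx m)).trans
    (eq_of_mem_raceSet_of_iInf_div_lt (fun i => (hp i).le) hq hs hrace hy).symm⟩

end raceWeight

theorem list_matching_lemma_relaxed_general
    {Ω : Type*} [MeasurableSpace Ω] (μ : Measure Ω)
    (N K : ℕ) (hK : 0 < K)
    (p q : Fin N → ℝ) (hp : ∀ i, 0 < p i) (hq : ∀ i, 0 < q i)
    (hpsum : ∑ i, p i = 1) (hqsum : ∑ i, q i = 1)
    (S : Fin N → Fin K → Ω → ℝ) (hSmeas : ∀ i k, Measurable (S i k))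
    (hSindep : iIndepFun
      (fun ik : Fin N × Fin K => S ik.1 ik.2) μ)
    (hSexp : ∀ i k, μ.map (S i k) = expMeasure 1)
    (Y : Ω → Fin N)
    (X : Fin K → Ω → Fin N)
    -- `Y` is a.s. the unique argmin of `i ↦ (min_k S i k) / q i`
    (hY : ∀ᵐ ω ∂μ, ∀ i : Fin N, i ≠ Y ω →
      (⨅ k : Fin K, S (Y ω) k ω) / q (Y ω) < (⨅ k : Fin K, S i k ω) / q i)
    -- each `X k` is a.s. the unique argmin of `i ↦ S i k / p i`
    (hX : ∀ᵐ ω ∂μ, ∀ k : Fin K, ∀ i : Fin N, i ≠ X k ω →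
      S (X k ω) k ω / p (X k ω) < S i k ω / p i)
    : ENNReal.ofReal (∑ j : Fin N, q j * (1 + q j / ((K : ℝ) * p j))⁻¹)
      ≤ μ {ω | ∃ k : Fin K, X k ω = Y ω} := by
  set Z : Fin N × Fin K → Ω → ℝ := fun ik => S ik.1 ik.2
  set E : Fin N × Fin K → Set Ω := fun n =>
    (fun ω l => Z l ω) ⁻¹' raceSet n (raceWeight p q n.1 n.2)
  have hZ : ∀ l, Measurable (Z l) := fun l => hSmeas l.1 l.2
  have hp0 : ∀ i, 0 ≤ p i := fun i => (hp i).le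
  have hq0 : ∀ i, 0 ≤ q i := fun i => (hq i).le
  have hq1 : ∀ j, q j ≤ 1 := fun j =>
    hqsum ▸ Finset.single_le_sum (fun i _ => hq0 i) (Finset.mem_univ j)
  have hK1 : (1 : ℝ) ≤ K := Nat.one_le_cast.2 hK
  have hZ_nonneg : ∀ᵐ ω ∂μ, ∀ l, 0 ≤ Z l ω := ae_all_iff.2 fun l =>
    ae_of_ae_map (hZ l).aemeasurable (by rw [hSexp]; exact ae_nonneg_expMeasure 1)
  have hE : ∀ n, μ (E n) = ENNReal.ofReal (K / q n.1 + 1 / p n.1 - 1)⁻¹ := fun n => by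
    rw [measure_preimage_raceSet hZ hSindep (fun l => hSexp l.1 l.2) n
      (fun l _ => raceWeight_nonneg hp0 hq0 ..),
      one_add_sum_erase_raceWeight (fun i => (hp i).ne') (fun i => (hq i).ne') hpsum hqsum]
  have hE_disj : Pairwise fun a b => AEDisjoint μ (E a) (E b) := fun a b hab =>
    aedisjoint_preimage_raceSet hab (raceWeight_nonneg hp0 hq0 ..)
      (one_le_raceWeight_mul_raceWeight hp0 hq ..) (hZ_nonneg.mono fun ω h => h a)
  have hE_sub : ⋃ n, E n ≤ᵐ[μ] {ω | ∃ k, X k ω = Y ω} := by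
    filter_upwards [hY, hX, hZ_nonneg] with ω hYω hXω hZω hω
    obtain ⟨⟨j, m⟩, hjm⟩ := mem_iUnion.1 hω
    exact exists_eq_of_mem_raceSet (s := fun i k => S i k ω) hp hq (hZω (j, m)) hjm hYω hXω
  calc ENNReal.ofReal (∑ j, q j * (1 + q j / ((K : ℝ) * p j))⁻¹)
      ≤ ENNReal.ofReal (∑ n : Fin N × Fin K, (K / q n.1 + 1 / p n.1 - 1)⁻¹) := by
        refine ENNReal.ofReal_le_ofReal ?_
        simp only [Fintype.sum_prod_type, Finset.sum_const, Finset.card_univ, Fintype.card_fin,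
          nsmul_eq_mul]
        exact Finset.sum_le_sum fun j _ => mul_inv_one_add_div_le hK1 (hp j) (hq j) (hq1 j)
    _ = ∑ n, μ (E n) := by
        rw [ENNReal.ofReal_sum_of_nonneg fun n _ =>
          (inv_pos.2 (div_add_one_div_sub_one_pos hK1 (hp n.1) (hq n.1) (hq1 n.1))).le]
        simp only [hE]
    _ = μ (⋃ n, E n) := by
        rw [measure_iUnion₀ hE_disj fun n =>
          ((measurableSet_raceSet _ _).preimage (measurable_pi_lambda _ hZ)).nullMeasurableSet,
          tsum_fintype]
    _ ≤ μ {ω | ∃ k, X k ω = Y ω} := measure_mono_ae hE_sub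

/-- **Relaxed list matching bound.**
Under Gumbel-max list sampling,
`Pr[Y ∈ {X 1, …, X K}] ≥ ∑ j, q j * (1 + q j / (K * p j))⁻¹`. -/
theorem list_matching_lemma_relaxed
    {Ω : Type*} [MeasurableSpace Ω] (μ : Measure Ω) [IsProbabilityMeasure μ]
    (N K : ℕ) (hN : 0 < N) (hK : 0 < K)
    (p q : Fin N → ℝ) (hp : ∀ i, 0 < p i) (hq : ∀ i, 0 < q i)
    (hpsum : ∑ i, p i = 1) (hqsum : ∑ i, q i = 1)
    (S : Fin N → Fin K → Ω → ℝ) (hSmeas : ∀ i k, Measurable (S i k))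
    (hSindep : iIndepFun
      (fun ik : Fin N × Fin K => S ik.1 ik.2) μ)
    (hSexp : ∀ i k, μ.map (S i k) = expMeasure 1)
    (Y : Ω → Fin N) (hYmeas : Measurable Y)
    (X : Fin K → Ω → Fin N) (hXmeas : ∀ k, Measurable (X k))
    -- `Y` is a.s. the unique argmin of `i ↦ (min_k S i k) / q i`
    (hY : ∀ᵐ ω ∂μ, ∀ i : Fin N, i ≠ Y ω →
      (⨅ k : Fin K, S (Y ω) k ω) / q (Y ω) < (⨅ k : Fin K, S i k ω) / q i)
    -- each `X k` is a.s. the unique argmin of `i ↦ S i k / p i`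
    (hX : ∀ᵐ ω ∂μ, ∀ k : Fin K, ∀ i : Fin N, i ≠ X k ω →
      S (X k ω) k ω / p (X k ω) < S i k ω / p i)
    : ENNReal.ofReal (∑ j : Fin N, q j * (1 + q j / ((K : ℝ) * p j))⁻¹)
      ≤ μ {ω | ∃ k : Fin K, X k ω = Y ω} :=
  list_matching_lemma_relaxed_general μ N K hK p q hp hq hpsum hqsum S hSmeas hSindep hSexp Y X hY
    hX
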